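/- Let A be a closed subset of a topological space X and p a prime. If A is a ℚ_p-homological Z_{n+1}-set in X (where ℚ_p = ℚ/R_p is the quasicyclic Prüfer p-group), then A is a ℤ_p-homological Z_n-set in X. -/

import Mathlib

open CategoryTheory CategoryTheory.Limits AlgebraicTopology

/-- The functor sending a type `S` to the free `G`-coefficient group `S →₀ G`. -/
noncomputable def coeffFunctor (G : Type) [AddCommGroup G] : Type ⥤ AddCommGrpCat where
  obj S := AddCommGrpCat.of (S →₀ G)
  map f := AddCommGrpCat.ofHom (Finsupp.mapDomain.addMonoidHom f)
  map_id S := by ext x; simp [Finsupp.mapDomain_single]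
  map_comp f g := by ext x; simp [Finsupp.mapDomain_single]

/-- The singular chain complex of `X` with coefficients in `G`. -/
noncomputable def singularChains (G : Type) [AddCommGroup G] (X : Type) [TopologicalSpace X] :
    ChainComplex AddCommGrpCat ℕ :=
  (alternatingFaceMapComplex AddCommGrpCat).obj
    (TopCat.toSSet.obj (TopCat.of X) ⋙ coeffFunctor G)

/-- The chain map induced by a continuous map. -/
noncomputable def singularChainsMap (G : Type) [AddCommGroup G] {X Y : Type}
    [TopologicalSpace X] [TopologicalSpace Y] (f : C(X, Y)) :
    singularChains G X ⟶ singularChains G Y :=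
  (alternatingFaceMapComplex AddCommGrpCat).map
    (Functor.whiskerRight (TopCat.toSSet.map (TopCat.ofHom f : TopCat.of X ⟶ TopCat.of Y)) (coeffFunctor G))

lemma singularChainsMap_comp (G : Type) [AddCommGroup G] {X Y Z : Type}
    [TopologicalSpace X] [TopologicalSpace Y] [TopologicalSpace Z] (f : C(X, Y)) (g : C(Y, Z)) :
    singularChainsMap G (g.comp f) = singularChainsMap G f ≫ singularChainsMap G g := by
  have e : TopCat.ofHom (g.comp f) = TopCat.ofHom f ≫ TopCat.ofHom g := rfl
  simp only [singularChainsMap, e, Functor.map_comp, Functor.whiskerRight_comp]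
  rfl

/-- Relative singular homology `H_k(U, U \ A; G)` of the pair of subspaces `(U, U \ A)` of `X`,
defined as the homology of the cokernel of the chain map induced by the inclusion
`U \ A ⊆ U`. -/
noncomputable def relHomology (G : Type) [AddCommGroup G] {X : Type} [TopologicalSpace X]
    (U A : Set X) (k : ℕ) : AddCommGrpCat :=
  (cokernel (singularChainsMap G
    (⟨Set.inclusion (Set.diff_subset : U \ A ⊆ U), continuous_inclusion _⟩ :
      C(↥(U \ A), ↥U)))).homology k

/-- `A` is a `G`-homological `Z_n`-set in `X` : it is closed and `H_k(U, U \ A; G) = 0`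
for all open `U ⊆ X` and all `k ≤ n`. -/
def IsHomologicalZSet (G : Type) [AddCommGroup G] {X : Type} [TopologicalSpace X]
    (n : ℕ) (A : Set X) : Prop :=
  IsClosed A ∧ ∀ U : Set X, IsOpen U → ∀ k : ℕ, k ≤ n → Subsingleton (relHomology G U A k)

/-- The subgroup `R_p ⊆ ℚ` of rationals whose denominator is not divisible by `p`
(i.e. rationals `a/b` with `b` coprime to `p`). -/
def RpGroup (p : ℕ) : AddSubgroup ℚ where
  carrier := {q | ∃ a b : ℤ, IsCoprime b (p : ℤ) ∧ (b : ℚ) * q = (a : ℚ)}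
  zero_mem' := ⟨0, 1, isCoprime_one_left, by simp⟩
  add_mem' := by
    rintro x y ⟨a₁, b₁, h₁, e₁⟩ ⟨a₂, b₂, h₂, e₂⟩
    refine ⟨a₁ * b₂ + a₂ * b₁, b₁ * b₂, h₁.mul_left h₂, ?_⟩
    push_cast
    linear_combination (b₂ : ℚ) * e₁ + (b₁ : ℚ) * e₂
  neg_mem' := by
    rintro x ⟨a, b, h, e⟩
    exact ⟨-a, b, h, by push_cast; linear_combination -e⟩
/-!
Multiplication by `p` maps `ℚ/R_p` onto itself with kernel the image of `ℤ/p`, `z ↦ z/p`.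
Singular chain groups are free, so this short exact sequence of coefficients gives short exact
sequences of singular chain complexes of `U \ A` and of `U`; the snake lemma, applied to the
injective chain map between them, turns them into a short exact sequence of relative chain
complexes. Its long exact homology sequence contains
`H_{k+1}(U, U \ A; ℚ_p) → H_k(U, U \ A; ℤ_p) → H_k(U, U \ A; ℚ_p)`, whose outer terms vanish
for `k ≤ n`.
-/

open Finsupp

namespace CategoryTheory.ShortComplex

variable {C : Type*} [Category* C] [Abelian C] {S₁ S₂ : ShortComplex C}

noncomputable def cokernelOfHom (φ : S₁ ⟶ S₂) : ShortComplex C where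
  f := cokernel.map φ.τ₁ φ.τ₂ S₁.f S₂.f φ.comm₁₂
  g := cokernel.map φ.τ₂ φ.τ₃ S₁.g S₂.g φ.comm₂₃
  zero := by ext; simp

noncomputable def kernelOfHom (φ : S₁ ⟶ S₂) : ShortComplex C where
  f := kernel.map φ.τ₁ φ.τ₂ S₁.f S₂.f φ.comm₁₂
  g := kernel.map φ.τ₂ φ.τ₃ S₁.g S₂.g φ.comm₂₃
  zero := by ext; simp

noncomputable def snakeInputOfHom (φ : S₁ ⟶ S₂) (h₁ : S₁.ShortExact) (h₂ : S₂.ShortExact) :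
    SnakeInput C where
  L₀ := kernelOfHom φ
  L₁ := S₁
  L₂ := S₂
  L₃ := cokernelOfHom φ
  v₀₁ := { τ₁ := kernel.ι _, τ₂ := kernel.ι _, τ₃ := kernel.ι _
           comm₁₂ := by simp [kernelOfHom], comm₂₃ := by simp [kernelOfHom] }
  v₁₂ := φ
  v₂₃ := { τ₁ := cokernel.π _, τ₂ := cokernel.π _, τ₃ := cokernel.π _
           comm₁₂ := by simp [cokernelOfHom], comm₂₃ := by simp [cokernelOfHom] }
  w₀₂ := by ext <;> exact kernel.condition _
  w₁₃ := by ext <;> exact cokernel.condition _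
  h₀ := by
    apply isLimitOfIsLimitπ <;> apply (KernelFork.isLimitMapConeEquiv _ _).2 <;>
      exact kernelIsKernel _
  h₃ := by
    apply isColimitOfIsColimitπ <;> apply (CokernelCofork.isColimitMapCoconeEquiv _ _).2 <;>
      exact cokernelIsCokernel _
  L₁_exact := h₁.exact
  epi_L₁_g := h₁.epi_g
  L₂_exact := h₂.exact
  mono_L₂_f := h₂.mono_f

theorem ShortExact.cokernelOfHom {φ : S₁ ⟶ S₂} (h₁ : S₁.ShortExact) (h₂ : S₂.ShortExact)
    [Mono φ.τ₃] : (cokernelOfHom φ).ShortExact := by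
  let S := snakeInputOfHom φ h₁ h₂
  have : Epi S.L₂.g := h₂.epi_g
  exact { exact := S.L₃_exact
          mono_f := S.L₂'_exact.mono_g ((isZero_kernel_of_mono φ.τ₃).eq_of_src _ _)
          epi_g := S.epi_L₃_g }

end CategoryTheory.ShortComplex

section Coefficients

variable {G₁ G₂ G₃ : Type} [AddCommGroup G₁] [AddCommGroup G₂] [AddCommGroup G₃]

theorem Function.Exact.finsuppMapRange {S : Type} {f : G₁ →+ G₂} {g : G₂ →+ G₃}
    (hfg : Function.Exact f g) :
    Function.Exact (mapRange.addMonoidHom (ι := S) f) (mapRange.addMonoidHom g) := by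
  classical
  intro y
  refine ⟨fun hy => ?_, ?_⟩
  · have hlift : ∀ s, ∃ x, f x = y s :=
      fun s => (hfg _).1 (by simpa using DFunLike.congr_fun hy s)
    choose x hx using hlift
    refine ⟨onFinset y.support (fun s => if y s = 0 then 0 else x s) fun s hs => ?_, ?_⟩
    · simpa using fun h => hs (if_pos h)
    · ext s
      by_cases h : y s = 0 <;> simp [h, hx]
  · rintro ⟨x, rfl⟩
    ext s
    simp [hfg.apply_apply_eq_zero]

noncomputable def coeffFunctorMap (φ : G₁ →+ G₂) : coeffFunctor G₁ ⟶ coeffFunctor G₂ where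
  app S := AddCommGrpCat.ofHom (mapRange.addMonoidHom φ)
  naturality S T f := by
    ext v
    exact (mapDomain_mapRange f v φ φ.map_zero φ.map_add).symm

noncomputable def singularChainsCoeffMap (φ : G₁ →+ G₂) (Y : Type) [TopologicalSpace Y] :
    singularChains G₁ Y ⟶ singularChains G₂ Y :=
  (alternatingFaceMapComplex AddCommGrpCat).map
    (Functor.whiskerLeft (TopCat.toSSet.obj (TopCat.of Y)) (coeffFunctorMap φ))

lemma singularChainsMap_comp_coeffMap (φ : G₁ →+ G₂) {Y Z : Type} [TopologicalSpace Y]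
    [TopologicalSpace Z] (h : C(Y, Z)) :
    singularChainsMap G₁ h ≫ singularChainsCoeffMap φ Z =
      singularChainsCoeffMap φ Y ≫ singularChainsMap G₂ h := by
  ext j : 1
  rw [HomologicalComplex.comp_f, HomologicalComplex.comp_f]
  exact (coeffFunctorMap φ).naturality _


noncomputable def singularChainsShortComplex {f : G₁ →+ G₂} {g : G₂ →+ G₃}
    (hfg : Function.Exact f g) (Y : Type) [TopologicalSpace Y] :
    ShortComplex (ChainComplex AddCommGrpCat ℕ) :=
  ShortComplex.mk (singularChainsCoeffMap f Y) (singularChainsCoeffMap g Y) (by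
    ext j : 1
    rw [HomologicalComplex.comp_f]
    ext : 1
    refine AddMonoidHom.ext fun (v : _ →₀ G₁) => Finsupp.ext fun s => ?_
    exact hfg.apply_apply_eq_zero (v s))

lemma singularChainsShortComplex_shortExact {f : G₁ →+ G₂} {g : G₂ →+ G₃}
    (hf : Function.Injective f) (hfg : Function.Exact f g) (hg : Function.Surjective g)
    (Y : Type) [TopologicalSpace Y] : (singularChainsShortComplex hfg Y).ShortExact :=
  HomologicalComplex.shortExact_of_degreewise_shortExact _ fun _ =>
    { exact := (ShortComplex.ab_exact_iff_function_exact _).2 hfg.finsuppMapRange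
      mono_f := (AddCommGrpCat.mono_iff_injective _).2 (mapRange_injective f f.map_zero hf)
      epi_g := (AddCommGrpCat.epi_iff_surjective _).2 (mapRange_surjective g g.map_zero hg) }

end Coefficients

lemma mono_singularChainsMap (G : Type) [AddCommGroup G] {Y Z : Type} [TopologicalSpace Y]
    [TopologicalSpace Z] {h : C(Y, Z)} (hh : Function.Injective h) :
    Mono (singularChainsMap G h) := by
  refine HomologicalComplex.mono_of_mono_f _ fun j =>
    (AddCommGrpCat.mono_iff_injective _).2 (mapDomain_injective ?_)
  intro σ τ hστ
  have hdown : σ.down ≫ TopCat.ofHom h = τ.down ≫ TopCat.ofHom h := congrArg ULift.down hστ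
  exact ULift.ext _ _ (TopCat.hom_ext (ContinuousMap.ext fun x =>
    hh (ConcreteCategory.congr_hom hdown x)))

section Relative

variable {G₁ G₂ G₃ : Type} [AddCommGroup G₁] [AddCommGroup G₂] [AddCommGroup G₃]
  {f : G₁ →+ G₂} {g : G₂ →+ G₃}

noncomputable def singularChainsShortComplexMap (hfg : Function.Exact f g) {Y Z : Type}
    [TopologicalSpace Y] [TopologicalSpace Z] (h : C(Y, Z)) :
    singularChainsShortComplex hfg Y ⟶ singularChainsShortComplex hfg Z where
  τ₁ := singularChainsMap G₁ h
  τ₂ := singularChainsMap G₂ h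
  τ₃ := singularChainsMap G₃ h
  comm₁₂ := singularChainsMap_comp_coeffMap f h
  comm₂₃ := singularChainsMap_comp_coeffMap g h

theorem relHomology_subsingleton_of_shortExact (hf : Function.Injective f)
    (hfg : Function.Exact f g) (hg : Function.Surjective g) {X : Type} [TopologicalSpace X]
    (U A : Set X) (k : ℕ) (h₂ : Subsingleton (relHomology G₂ U A k))
    (h₃ : Subsingleton (relHomology G₃ U A (k + 1))) :
    Subsingleton (relHomology G₁ U A k) := by
  let incl : C(↥(U \ A), ↥U) :=
    ⟨Set.inclusion Set.sdiff_subset, continuous_inclusion Set.sdiff_subset⟩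
  have : Mono (singularChainsShortComplexMap hfg incl).τ₃ :=
    mono_singularChainsMap G₃ (Set.inclusion_injective Set.sdiff_subset)
  have hS := ShortComplex.ShortExact.cokernelOfHom
    (singularChainsShortComplex_shortExact hf hfg hg _)
    (singularChainsShortComplex_shortExact hf hfg hg _)
    (φ := singularChainsShortComplexMap hfg incl)
  rw [← AddCommGrpCat.isZero_iff_subsingleton] at h₂ h₃ ⊢
  exact (hS.homology_exact₁ (k + 1) k rfl).isZero_of_both_zeros (h₃.eq_of_src _ _)
    (h₂.eq_of_tgt _ _)

theorem IsHomologicalZSet.of_shortExact (hf : Function.Injective f)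
    (hfg : Function.Exact f g) (hg : Function.Surjective g) {X : Type} [TopologicalSpace X]
    {n : ℕ} {A : Set X} (h₂ : IsHomologicalZSet G₂ n A) (h₃ : IsHomologicalZSet G₃ (n + 1) A) :
    IsHomologicalZSet G₁ n A :=
  ⟨h₂.1, fun U hU k hk => relHomology_subsingleton_of_shortExact hf hfg hg U A k
    (h₂.2 U hU k hk) (h₃.2 U hU (k + 1) (by omega))⟩

end Relative

theorem IsHomologicalZSet.mono {G : Type} [AddCommGroup G] {X : Type} [TopologicalSpace X]
    {m n : ℕ} {A : Set X} (h : IsHomologicalZSet G n A) (hmn : m ≤ n) :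
    IsHomologicalZSet G m A :=
  ⟨h.1, fun U hU k hk => h.2 U hU k (hk.trans hmn)⟩

section Prufer

variable {p : ℕ}

lemma intCast_mem_rpGroup (p : ℕ) (z : ℤ) : (z : ℚ) ∈ RpGroup p :=
  ⟨z, 1, isCoprime_one_left, by simp⟩

noncomputable def zmodToPrufer (p : ℕ) : ZMod p →+ ℚ ⧸ RpGroup p :=
  ZMod.lift p ⟨(QuotientAddGroup.mk' (RpGroup p)).comp
    (AddMonoidHom.mk' (fun z : ℤ => (z : ℚ) / p) fun a b => by push_cast; ring), by
      show ((((p : ℤ) : ℚ) / p : ℚ) : ℚ ⧸ RpGroup p) = 0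
      rw [QuotientAddGroup.eq_zero_iff]
      rcases eq_or_ne (p : ℚ) 0 with hp | hp
      · simp [hp]
      · simpa [hp] using intCast_mem_rpGroup p 1⟩

lemma zmodToPrufer_intCast (z : ℤ) :
    zmodToPrufer p z = (((z : ℚ) / p : ℚ) : ℚ ⧸ RpGroup p) :=
  ZMod.lift_coe p _ z

lemma prufer_natCast_zsmul_mk (q : ℚ) :
    (p : ℤ) • (q : ℚ ⧸ RpGroup p) = (((p : ℚ) * q : ℚ) : ℚ ⧸ RpGroup p) := by
  rw [← QuotientAddGroup.mk_zsmul, zsmul_eq_mul, Int.cast_natCast]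

lemma zmodToPrufer_injective (hp : p ≠ 0) : Function.Injective (zmodToPrufer p) := by
  rw [injective_iff_map_eq_zero]
  intro x hx
  obtain ⟨z, rfl⟩ := ZMod.intCast_surjective x
  rw [zmodToPrufer_intCast, QuotientAddGroup.eq_zero_iff] at hx
  obtain ⟨a, b, hb, hab⟩ := hx
  have hpQ : (p : ℚ) ≠ 0 := Nat.cast_ne_zero.2 hp
  have : b * z = p * a := by
    field_simp at hab
    exact_mod_cast hab
  exact (ZMod.intCast_zmod_eq_zero_iff_dvd z p).2 (hb.symm.dvd_of_dvd_mul_left ⟨a, this⟩)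

lemma prufer_zsmul_surjective (hp : p ≠ 0) :
    Function.Surjective (zsmulAddGroupHom (α := ℚ ⧸ RpGroup p) p) := by
  intro y
  obtain ⟨q, rfl⟩ := QuotientAddGroup.mk_surjective y
  refine ⟨((q / p : ℚ) : ℚ ⧸ RpGroup p), ?_⟩
  rw [zsmulAddGroupHom_apply, prufer_natCast_zsmul_mk, mul_div_cancel₀ q (Nat.cast_ne_zero.2 hp)]

lemma exact_zmodToPrufer_zsmul (hp : p ≠ 0) :
    Function.Exact (zmodToPrufer p) (zsmulAddGroupHom (α := ℚ ⧸ RpGroup p) p) := by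
  have hpQ : (p : ℚ) ≠ 0 := Nat.cast_ne_zero.2 hp
  intro y
  obtain ⟨q, rfl⟩ := QuotientAddGroup.mk_surjective y
  rw [zsmulAddGroupHom_apply, prufer_natCast_zsmul_mk, QuotientAddGroup.eq_zero_iff]
  constructor
  · rintro ⟨a, b, ⟨u, v, huv⟩, hab⟩
    -- `q ≡ u a / p` modulo `R_p`, because `u b + v p = 1`
    refine ⟨((u * a : ℤ) : ZMod p), ?_⟩
    rw [zmodToPrufer_intCast, QuotientAddGroup.eq_iff_sub_mem]
    refine ⟨-(v * a), b, ⟨u, v, huv⟩, ?_⟩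
    have huv' : (u : ℚ) * b + v * p = 1 := by exact_mod_cast huv
    field_simp
    push_cast
    linear_combination (a : ℚ) * huv' - hab
  · rintro ⟨x, hx⟩
    obtain ⟨z, rfl⟩ := ZMod.intCast_surjective x
    rw [zmodToPrufer_intCast, QuotientAddGroup.eq_iff_sub_mem] at hx
    have hpq : (p : ℚ) * q = z - p • ((z : ℚ) / p - q) := by
      rw [nsmul_eq_mul]
      field_simp
      ring
    rw [hpq]
    exact sub_mem (intCast_mem_rpGroup p z) (nsmul_mem hx p)

end Prufer

/-- If `A` is a `ℚ_p`-homological `Z_{n+1}`-set (`ℚ_p = ℚ/R_p` the quasicyclic Prüfer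
`p`-group), then `A` is a `ℤ_p`-homological `Z_n`-set. -/
theorem stmt14 {X : Type} [TopologicalSpace X] (A : Set X) (p : ℕ) (hp : p.Prime) (n : ℕ)
    (h : IsHomologicalZSet (ℚ ⧸ RpGroup p) (n + 1) A) :
    IsHomologicalZSet (ZMod p) n A :=
  IsHomologicalZSet.of_shortExact (zmodToPrufer_injective hp.ne_zero)
    (exact_zmodToPrufer_zsmul hp.ne_zero) (prufer_zsmul_surjective hp.ne_zero)
    (h.mono n.le_succ) h
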